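/- Let G=(V,w,m) be a connected, locally finite weighted graph with Deg_max < ∞, and let x₀ ≠ y₀ be vertices. Then the Ollivier curvature satisfies the duality κ(x₀,y₀) = sup_ρ Σ_{x ∈ B₁(x₀), y ∈ B₁(y₀)} ρ(x,y)·[1 − d(x,y)/d(x₀,y₀)], where the supremum is taken over all transport plans ρ between x₀ and y₀. -/

import Mathlib

open scoped BigOperators

/-- A weighted graph `G = (V, w, m)`: a symmetric edge-weight function `w`
vanishing on the diagonal, a positive vertex measure `m`, and local finiteness. -/
structure WeightedGraph (V : Type*) where
  w : V → V → ℝ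
  m : V → ℝ
  w_symm : ∀ x y, w x y = w y x
  w_nonneg : ∀ x y, 0 ≤ w x y
  w_diag : ∀ x, w x x = 0
  m_pos : ∀ x, 0 < m x
  locFin : ∀ x, {y | 0 < w x y}.Finite

namespace WeightedGraph

variable {V : Type*} (G : WeightedGraph V)

/-- Adjacency: `x ~ y` iff `w x y > 0`. -/
def Adj (x y : V) : Prop := 0 < G.w x y

/-- The underlying simple graph. -/
def toSimpleGraph : SimpleGraph V where
  Adj x y := 0 < G.w x y
  symm := by constructor; intro x y h; rw [G.w_symm y x]; exact h
  loopless := by constructor; intro x h; rw [G.w_diag] at h; exact lt_irrefl 0 h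

/-- Combinatorial graph distance. -/
noncomputable def d (x y : V) : ℕ := G.toSimpleGraph.dist x y

/-- Transition rate `q(x,y) = w(x,y)/m(x)`. -/
noncomputable def q (x y : V) : ℝ := G.w x y / G.m x

/-- The graph Laplacian `Δf(x) = Σ_y q(x,y) (f(y) - f(x))`. -/
noncomputable def lap (f : V → ℝ) (x : V) : ℝ := ∑ᶠ y, G.q x y * (f y - f x)

/-- The weighted vertex degree `Deg(x) = Σ_y q(x,y)`. -/
noncomputable def Deg (x : V) : ℝ := ∑ᶠ y, G.q x y

/-- The maximal weighted vertex degree. -/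
noncomputable def DegMax : ℝ := ⨆ x, G.Deg x

/-- The minimal transition rate over edges, `q_min = inf_{x ~ y} q(x,y)`. -/
noncomputable def qMin : ℝ := sInf {r : ℝ | ∃ x y, G.Adj x y ∧ r = G.q x y}

/-- `‖∇f‖_∞ = sup_{x ~ y} (f x - f y)/d(x,y)`. -/
noncomputable def gradNorm (f : V → ℝ) : ℝ :=
  sSup {r : ℝ | ∃ x y, G.Adj x y ∧ r = (f x - f y) / (G.d x y : ℝ)}

/-- The Ollivier curvature
`κ(x,y) = inf { ∇_{xy} Δf : ∇_{yx} f = 1, ‖∇f‖_∞ = 1 }`. -/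
noncomputable def kappa (x y : V) : ℝ :=
  sInf {r : ℝ | ∃ f : V → ℝ,
    (f y - f x) / (G.d y x : ℝ) = 1 ∧ G.gradNorm f = 1 ∧
    r = (G.lap f x - G.lap f y) / (G.d x y : ℝ)}

/-- A function is harmonic if `Δf = 0`. -/
def Harmonic (f : V → ℝ) : Prop := ∀ x, G.lap f x = 0

/-- A transport plan between `x₀ ≠ y₀`: a nonnegative function supported on
`B₁(x₀) × B₁(y₀)` whose marginals on the spheres `S₁(x₀)`, `S₁(y₀)` are
`q(x₀,·)` and `q(y₀,·)` respectively. -/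
def IsTransportPlan (x₀ y₀ : V) (ρ : V → V → ℝ) : Prop :=
  (∀ x y, 0 ≤ ρ x y) ∧
  (∀ x y, ρ x y ≠ 0 → G.d x₀ x ≤ 1 ∧ G.d y₀ y ≤ 1) ∧
  (∀ x, G.d x₀ x = 1 → ∑ᶠ y, ρ x y = G.q x₀ x) ∧
  (∀ y, G.d y₀ y = 1 → ∑ᶠ x, ρ x y = G.q y₀ y)

/-- The transport functional `Σ_{x,y} ρ(x,y) (1 - d(x,y)/d(x₀,y₀))`. -/
noncomputable def transportCost (x₀ y₀ : V) (ρ : V → V → ℝ) : ℝ :=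
  ∑ᶠ x, ∑ᶠ y, ρ x y * (1 - (G.d x y : ℝ) / (G.d x₀ y₀ : ℝ))

/-- An optimal transport plan attains the supremum of the transport functional. -/
def IsOptimalTransportPlan (x₀ y₀ : V) (ρ : V → V → ℝ) : Prop :=
  G.IsTransportPlan x₀ y₀ ρ ∧
  ∀ ρ' : V → V → ℝ, G.IsTransportPlan x₀ y₀ ρ' →
    G.transportCost x₀ y₀ ρ' ≤ G.transportCost x₀ y₀ ρ

end WeightedGraph

/-!
Weak duality: pairing a transport plan `ρ` with a function `f` that is 1-Lipschitz for the graph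
distance and satisfies `f y₀ - f x₀ = d(x₀, y₀)`, the marginal constraints turn
`∑ ρ(x, y) (d(x₀, y₀) - d(x, y))` into at most `Δf(x₀) - Δf(y₀)`.

Strong duality: the transport problem is a finite linear program on `B₁(x₀) × B₁(y₀)`. If every
plan costs less than `s`, Farkas' lemma provides dual potentials `g`, `h` with
`d(x₀, y₀) - d(x, y) ≤ g x + h y` on the two balls, and their c-transform
`f z = min_{u ∈ B₁(x₀)} (g u + d(u, z))` is a 1-Lipschitz function whose curvature quotient
`(Δf(x₀) - Δf(y₀)) / d(x₀, y₀)` is less than `s`.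
-/

namespace Matrix

open Metric

variable {ι κ : Type*} [Fintype ι]

lemma continuous_mulVec (N : Matrix κ ι ℝ) : Continuous (N *ᵥ ·) :=
  continuous_const.matrix_mulVec continuous_id

variable [Fintype κ] {N : Matrix κ ι ℝ}

lemma isCompact_Ici_inter_mulVec_preimage_closedBall
    (hN : ∀ i, ∃ k, 0 < N k i ∧ ∀ j, 0 ≤ N k j) (R : ℝ) :
    IsCompact (Set.Ici 0 ∩ (N *ᵥ ·) ⁻¹' closedBall 0 R) := by
  choose k hk_pos hk_nonneg using hN
  refine (isCompact_univ_pi fun i => isCompact_Icc (a := 0) (b := R / N (k i) i)).of_isClosed_subset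
    (isClosed_Ici.inter (isClosed_closedBall.preimage N.continuous_mulVec)) ?_
  rintro v ⟨hv, hNv⟩ i -
  refine ⟨hv i, (le_div_iff₀ (hk_pos i)).2 ?_⟩
  calc v i * N (k i) i = N (k i) i * v i := mul_comm _ _
    _ ≤ (N *ᵥ v) (k i) :=
      Finset.single_le_sum (fun j _ => mul_nonneg (hk_nonneg i j) (hv j)) (Finset.mem_univ i)
    _ ≤ ‖N *ᵥ v‖ := (le_abs_self _).trans (norm_le_pi_norm (N *ᵥ v) (k i))
    _ ≤ R := mem_closedBall_zero_iff.1 hNv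

lemma isClosed_mulVec_image_Ici (hN : ∀ i, ∃ k, 0 < N k i ∧ ∀ j, 0 ≤ N k j) :
    IsClosed ((N *ᵥ ·) '' Set.Ici 0) := by
  refine isClosed_of_closure_subset fun a ha => ?_
  have hcpt := (isCompact_Ici_inter_mulVec_preimage_closedBall hN (‖a‖ + 1)).image
    N.continuous_mulVec
  have hmem : a ∈ closure ((N *ᵥ ·) '' (Set.Ici 0 ∩ (N *ᵥ ·) ⁻¹' closedBall 0 (‖a‖ + 1))) := by
    refine closure_mono ?_ (isOpen_ball.inter_closure ⟨mem_ball_zero_iff.2 (lt_add_one _), ha⟩)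
    rintro _ ⟨hball, v, hv, rfl⟩
    exact ⟨v, ⟨hv, ball_subset_closedBall hball⟩, rfl⟩
  obtain ⟨v, hv, rfl⟩ := hcpt.isClosed.closure_subset hmem
  exact ⟨v, hv.1, rfl⟩

theorem farkas_alternative (hN : ∀ i, ∃ k, 0 < N k i ∧ ∀ j, 0 ≤ N k j) (b : κ → ℝ) :
    (∃ v, 0 ≤ v ∧ N *ᵥ v = b) ∨ ∃ y, 0 ≤ y ᵥ* N ∧ b ⬝ᵥ y < 0 := by
  classical
  by_cases hb : b ∈ (N *ᵥ ·) '' Set.Ici 0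
  · obtain ⟨v, hv, rfl⟩ := hb
    exact .inl ⟨v, hv, rfl⟩
  obtain ⟨f, u, hfb, hfC⟩ := geometric_hahn_banach_point_closed
    ((convex_Ici 0).linear_image N.mulVecLin) (isClosed_mulVec_image_Ici hN) hb
  set y : κ → ℝ := fun k => f (Pi.single k 1)
  have hf (a : κ → ℝ) : f a = a ⬝ᵥ y := by
    conv_lhs => rw [← Finset.univ_sum_single a]
    simp_rw [map_sum, dotProduct, y, ← smul_eq_mul, ← map_smul, ← Pi.single_smul', smul_eq_mul,
      mul_one]
  have hu : u < 0 := by simpa using hfC 0 ⟨0, Set.mem_Ici.2 le_rfl, mulVec_zero N⟩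
  have hcone : ∀ v, 0 ≤ v → 0 ≤ f (N *ᵥ v) := by
    intro v hv
    by_contra! hneg
    have := hfC _ ⟨(u / f (N *ᵥ v)) • v, smul_nonneg (div_nonneg_of_nonpos hu.le hneg.le) hv, rfl⟩
    rw [mulVecLin_apply, mulVec_smul, map_smul, smul_eq_mul, div_mul_cancel₀ _ hneg.ne] at this
    exact lt_irrefl _ this
  refine .inr ⟨y, fun i => ?_, by rw [← hf]; linarith⟩
  have := hcone (Pi.single i 1) (Pi.single_nonneg.2 zero_le_one)
  rwa [hf, mulVec_single_one, dotProduct_comm] at this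

theorem exists_dual_lt_of_forall_primal_lt (hN : ∀ i, ∃ k, 0 < N k i ∧ ∀ j, 0 ≤ N k j)
    {b : κ → ℝ} {c : ι → ℝ} {s : ℝ} {v₀ : ι → ℝ} (hv₀ : 0 ≤ v₀) (hNv₀ : N *ᵥ v₀ = b)
    (hlt : ∀ v, 0 ≤ v → N *ᵥ v = b → c ⬝ᵥ v < s) :
    ∃ y, c ≤ y ᵥ* N ∧ b ⬝ᵥ y < s := by
  have hM : ∀ i, ∃ k, 0 < fromRows N (replicateRow Unit c) k i ∧
      ∀ j, 0 ≤ fromRows N (replicateRow Unit c) k j := fun i => by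
    obtain ⟨k, hk⟩ := hN i
    exact ⟨.inl k, hk⟩
  rcases farkas_alternative hM (Sum.elim b fun _ => s) with ⟨v, hv, hMv⟩ | ⟨z, hz, hzb⟩
  · have hNv : N *ᵥ v = b := by simpa using congrArg (· ∘ Sum.inl) hMv
    have hcv : c ⬝ᵥ v = s := by simpa [mulVec, replicateRow_apply] using congrFun hMv (.inr ())
    exact absurd hcv (hlt v hv hNv).ne
  set t := z (.inr ())
  set z' := z ∘ Sum.inl
  have hz' : 0 ≤ z' ᵥ* N + t • c := fun i => by
    simpa [vecMul, dotProduct, replicateRow_apply, t, z'] using hz i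
  have hzb' : b ⬝ᵥ z' + s * t < 0 := by
    simpa [dotProduct, t, z'] using hzb
  -- pairing the dual certificate with the feasible point `v₀` forces `t < 0`
  have ht : t < 0 := by
    have hpair := dotProduct_nonneg_of_nonneg hz' hv₀
    rw [add_dotProduct, smul_dotProduct, ← dotProduct_mulVec, hNv₀, dotProduct_comm,
      smul_eq_mul] at hpair
    nlinarith [hlt v₀ hv₀ hNv₀]
  have hnt : 0 < -t := neg_pos.2 ht
  refine ⟨(-t)⁻¹ • z', fun i => ?_, ?_⟩
  · rw [smul_vecMul, Pi.smul_apply, smul_eq_mul, le_inv_mul_iff₀ hnt]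
    have := hz' i
    simp only [Pi.add_apply, Pi.smul_apply, smul_eq_mul, Pi.zero_apply] at this
    linarith
  · rw [dotProduct_smul, smul_eq_mul, inv_mul_lt_iff₀ hnt]
    linarith

end Matrix

theorem Finset.exists_dual_lt_of_forall_primal_lt {ι κ : Type*} (I : Finset ι) (K : Finset κ)
    (N : κ → ι → ℝ) (b : κ → ℝ) (c : ι → ℝ) (s : ℝ)
    (hN : ∀ i ∈ I, ∃ k ∈ K, 0 < N k i ∧ ∀ j ∈ I, 0 ≤ N k j)
    (hfeas : ∃ v : ι → ℝ, (∀ i ∈ I, 0 ≤ v i) ∧ ∀ k ∈ K, ∑ i ∈ I, N k i * v i = b k)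
    (hlt : ∀ v : ι → ℝ, (∀ i ∈ I, 0 ≤ v i) → (∀ k ∈ K, ∑ i ∈ I, N k i * v i = b k) →
      ∑ i ∈ I, c i * v i < s) :
    ∃ y : κ → ℝ, (∀ i ∈ I, c i ≤ ∑ k ∈ K, y k * N k i) ∧ ∑ k ∈ K, b k * y k < s := by
  obtain ⟨v₀, hv₀, hNv₀⟩ := hfeas
  obtain ⟨y, hy, hyb⟩ := Matrix.exists_dual_lt_of_forall_primal_lt
    (N := .of fun (k : K) (i : I) => N k i) (b := fun k => b k) (c := fun i => c i) (s := s)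
    (v₀ := fun i => v₀ i)
    (fun i => by
      obtain ⟨k, hk, hki, hkI⟩ := hN i i.2
      exact ⟨⟨k, hk⟩, hki, fun j => hkI j j.2⟩)
    (fun i => hv₀ i i.2)
    (funext fun k => by
      simpa [Matrix.mulVec, dotProduct, Finset.sum_attach I (fun i => N k i * v₀ i)]
        using hNv₀ k k.2)
    (fun v hv hNv => by
      have hsum (F : ι → ℝ) : ∑ i ∈ I, F i * Function.extend Subtype.val v 0 i =
          ∑ i : I, F i * v i := by
        rw [← Finset.sum_coe_sort]
        simp
      have := hlt (Function.extend Subtype.val v 0)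
        (fun i hi => (hv ⟨i, hi⟩).trans (Subtype.val_injective.extend_apply v 0 ⟨i, hi⟩).ge)
        (fun k hk => by simpa [hsum, Matrix.mulVec, dotProduct] using congrFun hNv ⟨k, hk⟩)
      simpa [hsum, dotProduct] using this)
  refine ⟨Function.extend Subtype.val y 0, fun i hi => ?_, ?_⟩
  · rw [← Finset.sum_coe_sort]
    simpa [Subtype.val_injective.extend_apply, Matrix.vecMul, dotProduct] using hy ⟨i, hi⟩
  · rw [← Finset.sum_coe_sort]
    simpa [Subtype.val_injective.extend_apply, dotProduct] using hyb

namespace WeightedGraph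

variable {V : Type*} {G : WeightedGraph V} {x₀ y₀ : V}

lemma q_nonneg (x y : V) : 0 ≤ G.q x y := div_nonneg (G.w_nonneg x y) (G.m_pos x).le

lemma adj_of_q_ne_zero {x y : V} (h : G.q x y ≠ 0) : G.Adj x y :=
  (G.w_nonneg x y).lt_of_ne fun hw => h (by rw [q, ← hw, zero_div])

lemma Adj.symm {x y : V} (h : G.Adj x y) : G.Adj y x := by
  rw [Adj, G.w_symm]
  exact h

lemma d_self (x : V) : G.d x x = 0 := SimpleGraph.dist_self

lemma d_comm (x y : V) : G.d x y = G.d y x := SimpleGraph.dist_comm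

lemma d_eq_one_iff {x y : V} : G.d x y = 1 ↔ G.Adj x y := SimpleGraph.dist_eq_one_iff_adj

lemma d_le_one_of_q_ne_zero {x y : V} (h : G.q x y ≠ 0) : G.d x y ≤ 1 :=
  (d_eq_one_iff.2 (adj_of_q_ne_zero h)).le

lemma d_le_one_iff (hconn : G.toSimpleGraph.Connected) {x y : V} :
    G.d x y ≤ 1 ↔ x = y ∨ G.Adj x y := by
  rw [Nat.le_one_iff_eq_zero_or_eq_one, d, hconn.dist_eq_zero_iff, ← d, d_eq_one_iff]

lemma d_pos (hconn : G.toSimpleGraph.Connected) (hxy : x₀ ≠ y₀) : (0 : ℝ) < G.d x₀ y₀ :=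
  Nat.cast_pos.2 (hconn.pos_dist_of_ne hxy)

variable (G) in
noncomputable def S₁ (x : V) : Finset V := (G.locFin x).toFinset

lemma mem_S₁ {x z : V} : z ∈ G.S₁ x ↔ G.Adj x z := Set.Finite.mem_toFinset _

lemma notMem_S₁_self (x : V) : x ∉ G.S₁ x := fun h => by
  simpa [Adj, G.w_diag] using mem_S₁.1 h

variable (G) in
noncomputable def B₁ (x : V) : Finset V := (G.S₁ x).cons x (notMem_S₁_self x)

lemma mem_B₁ {x z : V} : z ∈ G.B₁ x ↔ z = x ∨ G.Adj x z := by simp [B₁, mem_S₁]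

lemma mem_B₁_iff_d_le_one (hconn : G.toSimpleGraph.Connected) {x z : V} :
    z ∈ G.B₁ x ↔ G.d x z ≤ 1 := by
  rw [mem_B₁, d_le_one_iff hconn, eq_comm]

lemma self_mem_B₁ (x : V) : x ∈ G.B₁ x := mem_B₁.2 (.inl rfl)

lemma mem_B₁_of_mem_S₁ {x z : V} (h : z ∈ G.S₁ x) : z ∈ G.B₁ x := mem_B₁.2 (.inr (mem_S₁.1 h))

lemma sum_B₁ (x : V) (f : V → ℝ) : ∑ z ∈ G.B₁ x, f z = f x + ∑ z ∈ G.S₁ x, f z :=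
  Finset.sum_cons _

lemma lap_eq_sum (f : V → ℝ) (x : V) : G.lap f x = ∑ z ∈ G.S₁ x, G.q x z * (f z - f x) :=
  finsum_eq_sum_of_support_subset _ fun _ hz =>
    mem_S₁.2 (adj_of_q_ne_zero (left_ne_zero_of_mul hz))

variable (G) in
def IsOneLipschitz (f : V → ℝ) : Prop := ∀ a b, G.Adj a b → f a - f b ≤ 1

lemma IsOneLipschitz.sub_le_length {f : V → ℝ} (hf : G.IsOneLipschitz f) {a b : V}
    (p : G.toSimpleGraph.Walk a b) : f a - f b ≤ p.length := by
  induction p with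
  | nil => simp
  | @cons u v _ h p ih =>
    rw [SimpleGraph.Walk.length_cons, Nat.cast_succ]
    linarith [hf u v h]

lemma IsOneLipschitz.sub_le_d (hconn : G.toSimpleGraph.Connected) {f : V → ℝ}
    (hf : G.IsOneLipschitz f) (a b : V) : f a - f b ≤ G.d a b := by
  obtain ⟨p, hp⟩ := hconn.exists_walk_length_eq_dist a b
  rw [d, ← hp]
  exact hf.sub_le_length p

lemma IsOneLipschitz.exists_adj_sub_eq_one (hconn : G.toSimpleGraph.Connected) {f : V → ℝ}
    (hf : G.IsOneLipschitz f) {a b : V} (hab : a ≠ b) (h : f a - f b = G.d a b) :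
    ∃ u v, G.Adj u v ∧ f u - f v = 1 := by
  obtain ⟨p, hp⟩ := hconn.exists_walk_length_eq_dist a b
  cases p with
  | nil => exact absurd rfl hab
  | @cons _ v _ hav p =>
    refine ⟨a, v, hav, le_antisymm (hf a v hav) ?_⟩
    have := hf.sub_le_length p
    rw [d, ← hp, SimpleGraph.Walk.length_cons, Nat.cast_succ] at h
    linarith

lemma isOneLipschitz_const_add_d (hconn : G.toSimpleGraph.Connected) (c : ℝ) (u : V) :
    G.IsOneLipschitz fun z => c + G.d u z := fun a b hab => by
  have : G.d u a ≤ G.d u b + G.d b a := hconn.dist_triangle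
  rw [d_eq_one_iff.2 hab.symm] at this
  have : (G.d u a : ℝ) ≤ G.d u b + 1 := by exact_mod_cast this
  linarith

lemma IsOneLipschitz.finset_inf' {ι : Type*} {s : Finset ι} (hs : s.Nonempty) {F : ι → V → ℝ}
    (hF : ∀ i ∈ s, G.IsOneLipschitz (F i)) : G.IsOneLipschitz fun z => s.inf' hs (F · z) :=
  fun a b hab => by
    obtain ⟨i, hi, hib⟩ := s.exists_mem_eq_inf' hs (F · b)
    have := s.inf'_le (F · a) hi
    linarith [hF i hi a b hab]

lemma gradNorm_eq (f : V → ℝ) : G.gradNorm f = sSup {r | ∃ x y, G.Adj x y ∧ r = f x - f y} := by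
  refine congrArg sSup (Set.ext fun r => exists₂_congr fun x y => and_congr_right fun h => ?_)
  rw [d_eq_one_iff.2 h, Nat.cast_one, div_one]

lemma IsOneLipschitz.of_gradNorm_eq_one {f : V → ℝ} (h : G.gradNorm f = 1) :
    G.IsOneLipschitz f := fun a b hab => by
  rw [gradNorm_eq] at h
  have hbdd : BddAbove {r | ∃ x y, G.Adj x y ∧ r = f x - f y} := by
    by_contra hb
    rw [Real.sSup_of_not_bddAbove hb] at h
    exact zero_ne_one h
  exact h ▸ le_csSup hbdd ⟨a, b, hab, rfl⟩

lemma IsOneLipschitz.gradNorm_eq_one {f : V → ℝ} (hf : G.IsOneLipschitz f)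
    (h : ∃ a b, G.Adj a b ∧ f a - f b = 1) : G.gradNorm f = 1 := by
  obtain ⟨a, b, hab, h1⟩ := h
  have hle : ∀ r ∈ {r | ∃ x y, G.Adj x y ∧ r = f x - f y}, r ≤ 1 := by
    rintro _ ⟨x, y, hxy, rfl⟩
    exact hf x y hxy
  rw [gradNorm_eq]
  exact le_antisymm (csSup_le ⟨_, a, b, hab, rfl⟩ hle) (h1 ▸ le_csSup ⟨1, hle⟩ ⟨a, b, hab, rfl⟩)

lemma kappa_eq_sInf (hconn : G.toSimpleGraph.Connected) (hxy : x₀ ≠ y₀) :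
    G.kappa x₀ y₀ = sInf {r | ∃ f, G.IsOneLipschitz f ∧ f y₀ - f x₀ = G.d x₀ y₀ ∧
      r = (G.lap f x₀ - G.lap f y₀) / G.d x₀ y₀} := by
  refine congrArg sInf (Set.ext fun r => exists_congr fun f => ?_)
  rw [d_comm y₀, div_eq_one_iff_eq (d_pos hconn hxy).ne']
  constructor
  · rintro ⟨hxy', hf, hr⟩
    exact ⟨.of_gradNorm_eq_one hf, hxy', hr⟩
  · rintro ⟨hf, hxy', hr⟩
    refine ⟨hxy', hf.gradNorm_eq_one (hf.exists_adj_sub_eq_one hconn hxy.symm ?_), hr⟩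
    rwa [d_comm]

variable {ρ : V → V → ℝ}

lemma finsum_eq_sum_B₁_right (hconn : G.toSimpleGraph.Connected)
    (hsupp : ∀ x y, ρ x y ≠ 0 → G.d x₀ x ≤ 1 ∧ G.d y₀ y ≤ 1) (x : V) :
    ∑ᶠ y, ρ x y = ∑ y ∈ G.B₁ y₀, ρ x y :=
  finsum_eq_sum_of_support_subset _ fun y hy => (mem_B₁_iff_d_le_one hconn).2 (hsupp x y hy).2

lemma finsum_eq_sum_B₁_left (hconn : G.toSimpleGraph.Connected)
    (hsupp : ∀ x y, ρ x y ≠ 0 → G.d x₀ x ≤ 1 ∧ G.d y₀ y ≤ 1) (y : V) :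
    ∑ᶠ x, ρ x y = ∑ x ∈ G.B₁ x₀, ρ x y :=
  finsum_eq_sum_of_support_subset _ fun x hx => (mem_B₁_iff_d_le_one hconn).2 (hsupp x y hx).1

lemma d_mul_transportCost (hconn : G.toSimpleGraph.Connected) (hxy : x₀ ≠ y₀)
    (hsupp : ∀ x y, ρ x y ≠ 0 → G.d x₀ x ≤ 1 ∧ G.d y₀ y ≤ 1) :
    G.d x₀ y₀ * G.transportCost x₀ y₀ ρ =
      ∑ x ∈ G.B₁ x₀, ∑ y ∈ G.B₁ y₀, (G.d x₀ y₀ - G.d x y) * ρ x y := by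
  have hrow (x : V) : ∑ᶠ y, ρ x y * (1 - G.d x y / G.d x₀ y₀) =
      ∑ y ∈ G.B₁ y₀, ρ x y * (1 - G.d x y / G.d x₀ y₀) :=
    finsum_eq_sum_of_support_subset _ fun y hy =>
      (mem_B₁_iff_d_le_one hconn).2 (hsupp x y (left_ne_zero_of_mul hy)).2
  rw [transportCost, finsum_congr hrow, finsum_eq_sum_of_support_subset _ fun x hx => ?_,
    Finset.mul_sum]
  · refine Finset.sum_congr rfl fun x _ => ?_
    rw [Finset.mul_sum]
    refine Finset.sum_congr rfl fun y _ => ?_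
    field_simp [(d_pos hconn hxy).ne']
  · obtain ⟨y, -, hy⟩ := Finset.exists_ne_zero_of_sum_ne_zero hx
    exact (mem_B₁_iff_d_le_one hconn).2 (hsupp x y (left_ne_zero_of_mul hy)).1

lemma IsTransportPlan.sum_add_mul (hconn : G.toSimpleGraph.Connected)
    (hρ : G.IsTransportPlan x₀ y₀ ρ) {g h : V → ℝ} (hg : g x₀ = 0) (hh : h y₀ = 0) :
    ∑ x ∈ G.B₁ x₀, ∑ y ∈ G.B₁ y₀, (g x + h y) * ρ x y =
      ∑ x ∈ G.S₁ x₀, G.q x₀ x * g x + ∑ y ∈ G.S₁ y₀, G.q y₀ y * h y := by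
  obtain ⟨-, hsupp, hrow, hcol⟩ := hρ
  simp only [add_mul, Finset.sum_add_distrib]
  rw [Finset.sum_comm (f := fun x y => h y * ρ x y)]
  simp only [← Finset.mul_sum]
  rw [sum_B₁ x₀ fun x => g x * ∑ y ∈ G.B₁ y₀, ρ x y,
    sum_B₁ y₀ fun y => h y * ∑ x ∈ G.B₁ x₀, ρ x y, hg, hh, zero_mul, zero_mul, zero_add, zero_add]
  congr 1 <;> refine Finset.sum_congr rfl fun z hz => ?_
  · rw [← finsum_eq_sum_B₁_right hconn hsupp, hrow z (d_eq_one_iff.2 (mem_S₁.1 hz)), mul_comm]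
  · rw [← finsum_eq_sum_B₁_left hconn hsupp, hcol z (d_eq_one_iff.2 (mem_S₁.1 hz)), mul_comm]

theorem IsTransportPlan.transportCost_le (hconn : G.toSimpleGraph.Connected) (hxy : x₀ ≠ y₀)
    (hρ : G.IsTransportPlan x₀ y₀ ρ) {f : V → ℝ} (hf : G.IsOneLipschitz f)
    (hfxy : f y₀ - f x₀ = G.d x₀ y₀) :
    G.transportCost x₀ y₀ ρ ≤ (G.lap f x₀ - G.lap f y₀) / G.d x₀ y₀ := by
  rw [le_div_iff₀ (d_pos hconn hxy), mul_comm, d_mul_transportCost hconn hxy hρ.2.1]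
  calc ∑ x ∈ G.B₁ x₀, ∑ y ∈ G.B₁ y₀, (G.d x₀ y₀ - G.d x y) * ρ x y
      ≤ ∑ x ∈ G.B₁ x₀, ∑ y ∈ G.B₁ y₀, ((f x - f x₀) + (f y₀ - f y)) * ρ x y := by
        refine Finset.sum_le_sum fun x _ => Finset.sum_le_sum fun y _ =>
          mul_le_mul_of_nonneg_right ?_ (hρ.1 x y)
        have := hf.sub_le_d hconn y x
        rw [d_comm] at this
        linarith
    _ = ∑ x ∈ G.S₁ x₀, G.q x₀ x * (f x - f x₀) + ∑ y ∈ G.S₁ y₀, G.q y₀ y * (f y₀ - f y) :=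
        hρ.sum_add_mul hconn (sub_self _) (sub_self _)
    _ = G.lap f x₀ - G.lap f y₀ := by
        rw [lap_eq_sum, lap_eq_sum, sub_eq_add_neg, ← Finset.sum_neg_distrib]
        congr 1
        exact Finset.sum_congr rfl fun y _ => by ring

variable (G) in
open Classical in
noncomputable def trivialPlan (x₀ y₀ : V) (x y : V) : ℝ :=
  (if y = y₀ then G.q x₀ x else 0) + (if x = x₀ then G.q y₀ y else 0)

lemma isTransportPlan_trivialPlan : G.IsTransportPlan x₀ y₀ (G.trivialPlan x₀ y₀) := by
  classical
  refine ⟨fun x y => ?_, fun x y h => ⟨?_, ?_⟩, fun x hx => ?_, fun y hy => ?_⟩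
  · unfold trivialPlan
    split_ifs <;> simp [q_nonneg, add_nonneg]
  · by_contra hd
    have hx : x ≠ x₀ := by rintro rfl; simp [d_self] at hd
    have hq : G.q x₀ x = 0 := by by_contra hq; exact hd (d_le_one_of_q_ne_zero hq)
    exact h (by simp [trivialPlan, hx, hq])
  · by_contra hd
    have hy : y ≠ y₀ := by rintro rfl; simp [d_self] at hd
    have hq : G.q y₀ y = 0 := by by_contra hq; exact hd (d_le_one_of_q_ne_zero hq)
    exact h (by simp [trivialPlan, hy, hq])
  · have hx' : x ≠ x₀ := by rintro rfl; simp [d_self] at hx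
    rw [finsum_eq_single _ y₀ fun y hy => by simp [trivialPlan, hy, hx']]
    simp [trivialPlan, hx']
  · have hy' : y ≠ y₀ := by rintro rfl; simp [d_self] at hy
    rw [finsum_eq_single _ x₀ fun x hx => by simp [trivialPlan, hx, hy']]
    simp [trivialPlan, hy']

/-! The transport problem as a linear program: one variable for each pair in `planIndex`, and one
marginal constraint for each row in `marginalIndex`, with coefficients `marginalCoeff` and
right-hand side `Sum.elim (G.q x₀) (G.q y₀)`. The pair `(x₀, y₀)` carries neither cost nor
constraint; leaving it out gives every variable a constraint row, as
`Finset.exists_dual_lt_of_forall_primal_lt` requires. -/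

variable (G) in
open Classical in
noncomputable def planIndex (x₀ y₀ : V) : Finset (V × V) := (G.B₁ x₀ ×ˢ G.B₁ y₀).erase (x₀, y₀)

variable (G) in
noncomputable def marginalIndex (x₀ y₀ : V) : Finset (V ⊕ V) := (G.S₁ x₀).disjSum (G.S₁ y₀)

open Classical in
noncomputable def marginalCoeff : V ⊕ V → V × V → ℝ
  | .inl x, p => if p.1 = x then 1 else 0
  | .inr y, p => if p.2 = y then 1 else 0

lemma marginalCoeff_nonneg (k : V ⊕ V) (p : V × V) : 0 ≤ marginalCoeff k p := by
  cases k <;> simp only [marginalCoeff] <;> split_ifs <;> norm_num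

lemma exists_marginalCoeff_pos {p : V × V} (hp : p ∈ G.planIndex x₀ y₀) :
    ∃ k ∈ G.marginalIndex x₀ y₀, 0 < marginalCoeff k p := by
  classical
  obtain ⟨x, y⟩ := p
  obtain ⟨hne, hx, hy⟩ : (x, y) ≠ (x₀, y₀) ∧ x ∈ G.B₁ x₀ ∧ y ∈ G.B₁ y₀ := by
    simpa [planIndex] using hp
  rcases mem_B₁.1 hx with rfl | hx
  · rcases mem_B₁.1 hy with rfl | hy
    · exact absurd rfl hne
    · exact ⟨.inr y, Finset.inr_mem_disjSum.2 (mem_S₁.2 hy), by simp [marginalCoeff]⟩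
  · exact ⟨.inl x, Finset.inl_mem_disjSum.2 (mem_S₁.2 hx), by simp [marginalCoeff]⟩

lemma sum_planIndex {F : V × V → ℝ} (hF : F (x₀, y₀) = 0) :
    ∑ p ∈ G.planIndex x₀ y₀, F p = ∑ x ∈ G.B₁ x₀, ∑ y ∈ G.B₁ y₀, F (x, y) := by
  classical
  rw [planIndex, Finset.sum_erase _ hF, Finset.sum_product]

lemma sum_planIndex_marginalCoeff_inl {x : V} (hx : x ∈ G.S₁ x₀) (ρ : V → V → ℝ) :
    ∑ p ∈ G.planIndex x₀ y₀, marginalCoeff (.inl x) p * ρ p.1 p.2 = ∑ y ∈ G.B₁ y₀, ρ x y := by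
  have hx₀ : x₀ ≠ x := by rintro rfl; exact notMem_S₁_self _ hx
  rw [sum_planIndex (by simp [marginalCoeff, hx₀])]
  rw [Finset.sum_eq_single_of_mem x (mem_B₁_of_mem_S₁ hx) fun a _ ha =>
    Finset.sum_eq_zero fun _ _ => by simp [marginalCoeff, ha]]
  simp [marginalCoeff]

lemma sum_planIndex_marginalCoeff_inr {y : V} (hy : y ∈ G.S₁ y₀) (ρ : V → V → ℝ) :
    ∑ p ∈ G.planIndex x₀ y₀, marginalCoeff (.inr y) p * ρ p.1 p.2 = ∑ x ∈ G.B₁ x₀, ρ x y := by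
  have hy₀ : y₀ ≠ y := by rintro rfl; exact notMem_S₁_self _ hy
  rw [sum_planIndex (by simp [marginalCoeff, hy₀])]
  refine Finset.sum_congr rfl fun x _ => ?_
  rw [Finset.sum_eq_single_of_mem y (mem_B₁_of_mem_S₁ hy) fun b _ hb => by simp [marginalCoeff, hb]]
  simp [marginalCoeff]

lemma isTransportPlan_iff_marginals (hconn : G.toSimpleGraph.Connected)
    (hnn : ∀ x y, 0 ≤ ρ x y) (hsupp : ∀ x y, ρ x y ≠ 0 → G.d x₀ x ≤ 1 ∧ G.d y₀ y ≤ 1) :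
    G.IsTransportPlan x₀ y₀ ρ ↔ ∀ k ∈ G.marginalIndex x₀ y₀,
      ∑ p ∈ G.planIndex x₀ y₀, marginalCoeff k p * ρ p.1 p.2 = Sum.elim (G.q x₀) (G.q y₀) k := by
  constructor
  · rintro ⟨-, -, hrow, hcol⟩ (x | y) hk
    · rw [marginalIndex, Finset.inl_mem_disjSum] at hk
      rw [sum_planIndex_marginalCoeff_inl hk, ← finsum_eq_sum_B₁_right hconn hsupp,
        hrow x (d_eq_one_iff.2 (mem_S₁.1 hk)), Sum.elim_inl]
    · rw [marginalIndex, Finset.inr_mem_disjSum] at hk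
      rw [sum_planIndex_marginalCoeff_inr hk, ← finsum_eq_sum_B₁_left hconn hsupp,
        hcol y (d_eq_one_iff.2 (mem_S₁.1 hk)), Sum.elim_inr]
  · intro h
    refine ⟨hnn, hsupp, fun x hx => ?_, fun y hy => ?_⟩
    · have hx' : x ∈ G.S₁ x₀ := mem_S₁.2 (d_eq_one_iff.1 hx)
      rw [finsum_eq_sum_B₁_right hconn hsupp, ← sum_planIndex_marginalCoeff_inl hx',
        h _ (Finset.inl_mem_disjSum.2 hx'), Sum.elim_inl]
    · have hy' : y ∈ G.S₁ y₀ := mem_S₁.2 (d_eq_one_iff.1 hy)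
      rw [finsum_eq_sum_B₁_left hconn hsupp, ← sum_planIndex_marginalCoeff_inr hy',
        h _ (Finset.inr_mem_disjSum.2 hy'), Sum.elim_inr]

lemma isTransportPlan_indicator (hconn : G.toSimpleGraph.Connected) {v : V × V → ℝ}
    (hv : ∀ p ∈ G.planIndex x₀ y₀, 0 ≤ v p)
    (hmarg : ∀ k ∈ G.marginalIndex x₀ y₀,
      ∑ p ∈ G.planIndex x₀ y₀, marginalCoeff k p * v p = Sum.elim (G.q x₀) (G.q y₀) k) :
    G.IsTransportPlan x₀ y₀ fun x y => (G.planIndex x₀ y₀ : Set (V × V)).indicator v (x, y) := by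
  classical
  refine (isTransportPlan_iff_marginals hconn (fun x y => Set.indicator_nonneg hv _)
    fun x y h => ?_).2 fun k hk => ?_
  · have hp := Set.mem_of_indicator_ne_zero h
    rw [Finset.mem_coe, planIndex, Finset.mem_erase, Finset.mem_product] at hp
    exact ⟨(mem_B₁_iff_d_le_one hconn).1 hp.2.1, (mem_B₁_iff_d_le_one hconn).1 hp.2.2⟩
  · rw [← hmarg k hk]
    exact Finset.sum_congr rfl fun p hp =>
      congrArg (marginalCoeff k p * ·) (Set.indicator_of_mem (Finset.mem_coe.2 hp) v)

lemma d_mul_transportCost_eq_sum_planIndex (hconn : G.toSimpleGraph.Connected) (hxy : x₀ ≠ y₀)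
    (hsupp : ∀ x y, ρ x y ≠ 0 → G.d x₀ x ≤ 1 ∧ G.d y₀ y ≤ 1) :
    G.d x₀ y₀ * G.transportCost x₀ y₀ ρ =
      ∑ p ∈ G.planIndex x₀ y₀, ((G.d x₀ y₀ : ℝ) - G.d p.1 p.2) * ρ p.1 p.2 := by
  rw [d_mul_transportCost hconn hxy hsupp, sum_planIndex (by simp)]

lemma sum_marginalIndex_mul_marginalCoeff (y : V ⊕ V → ℝ) (p : V × V) :
    ∑ k ∈ G.marginalIndex x₀ y₀, y k * marginalCoeff k p =
      (G.S₁ x₀ : Set V).indicator (y ∘ .inl) p.1 + (G.S₁ y₀ : Set V).indicator (y ∘ .inr) p.2 := by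
  classical
  simp [marginalIndex, Finset.sum_disjSum, marginalCoeff, Set.indicator_apply]

lemma sum_marginalIndex_q_mul (y : V ⊕ V → ℝ) :
    ∑ k ∈ G.marginalIndex x₀ y₀, Sum.elim (G.q x₀) (G.q y₀) k * y k =
      ∑ x ∈ G.S₁ x₀, G.q x₀ x * (G.S₁ x₀ : Set V).indicator (y ∘ .inl) x +
        ∑ y' ∈ G.S₁ y₀, G.q y₀ y' * (G.S₁ y₀ : Set V).indicator (y ∘ .inr) y' := by
  rw [marginalIndex, Finset.sum_disjSum]
  congr 1 <;> refine Finset.sum_congr rfl fun z hz => ?_ <;>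
    rw [Set.indicator_of_mem (Finset.mem_coe.2 hz)] <;> rfl

theorem exists_dual_of_forall_transportCost_lt (hconn : G.toSimpleGraph.Connected)
    (hxy : x₀ ≠ y₀) {s : ℝ}
    (hs : ∀ ρ, G.IsTransportPlan x₀ y₀ ρ → G.transportCost x₀ y₀ ρ < s) :
    ∃ g h : V → ℝ, g x₀ = 0 ∧ h y₀ = 0 ∧
      (∀ x ∈ G.B₁ x₀, ∀ y ∈ G.B₁ y₀, (G.d x₀ y₀ : ℝ) - G.d x y ≤ g x + h y) ∧
      ∑ x ∈ G.S₁ x₀, G.q x₀ x * g x + ∑ y ∈ G.S₁ y₀, G.q y₀ y * h y < G.d x₀ y₀ * s := by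
  classical
  have h₀ : G.IsTransportPlan x₀ y₀ (G.trivialPlan x₀ y₀) := isTransportPlan_trivialPlan
  obtain ⟨y, hdual, hyb⟩ := Finset.exists_dual_lt_of_forall_primal_lt (G.planIndex x₀ y₀)
    (G.marginalIndex x₀ y₀) marginalCoeff (Sum.elim (G.q x₀) (G.q y₀))
    (fun p => (G.d x₀ y₀ : ℝ) - G.d p.1 p.2) (G.d x₀ y₀ * s)
    (fun p hp => (exists_marginalCoeff_pos hp).imp fun k hk =>
      ⟨hk.1, hk.2, fun _ _ => marginalCoeff_nonneg _ _⟩)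
    ⟨fun p => G.trivialPlan x₀ y₀ p.1 p.2, fun p _ => h₀.1 _ _,
      (isTransportPlan_iff_marginals hconn h₀.1 h₀.2.1).1 h₀⟩
    fun v hv hmarg => by
      have hρ := isTransportPlan_indicator hconn hv hmarg
      calc ∑ p ∈ G.planIndex x₀ y₀, ((G.d x₀ y₀ : ℝ) - G.d p.1 p.2) * v p
          = ∑ p ∈ G.planIndex x₀ y₀, ((G.d x₀ y₀ : ℝ) - G.d p.1 p.2) *
              (G.planIndex x₀ y₀ : Set (V × V)).indicator v p :=
            Finset.sum_congr rfl fun p hp => by rw [Set.indicator_of_mem (Finset.mem_coe.2 hp)]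
        _ = G.d x₀ y₀ * G.transportCost x₀ y₀ _ :=
            (d_mul_transportCost_eq_sum_planIndex hconn hxy hρ.2.1).symm
        _ < G.d x₀ y₀ * s := mul_lt_mul_of_pos_left (hs _ hρ) (d_pos hconn hxy)
  refine ⟨_, _, Set.indicator_of_notMem (notMem_S₁_self x₀) _,
    Set.indicator_of_notMem (notMem_S₁_self y₀) _, fun x hx y' hy' => ?_,
    (sum_marginalIndex_q_mul y).symm.trans_lt hyb⟩
  by_cases hp : (x, y') = (x₀, y₀)
  · obtain ⟨rfl, rfl⟩ := Prod.mk.inj hp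
    simp [Set.indicator_of_notMem, notMem_S₁_self]
  · have := hdual (x, y') (Finset.mem_erase.2 ⟨hp, Finset.mem_product.2 ⟨hx, hy'⟩⟩)
    rwa [sum_marginalIndex_mul_marginalCoeff] at this

theorem exists_isOneLipschitz_of_dual (hconn : G.toSimpleGraph.Connected) {g h : V → ℝ}
    (hg : g x₀ = 0) (hh : h y₀ = 0)
    (hgh : ∀ x ∈ G.B₁ x₀, ∀ y ∈ G.B₁ y₀, (G.d x₀ y₀ : ℝ) - G.d x y ≤ g x + h y) :
    ∃ f, G.IsOneLipschitz f ∧ f y₀ - f x₀ = G.d x₀ y₀ ∧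
      G.lap f x₀ - G.lap f y₀ ≤
        ∑ x ∈ G.S₁ x₀, G.q x₀ x * g x + ∑ y ∈ G.S₁ y₀, G.q y₀ y * h y := by
  set f : V → ℝ := fun z => (G.B₁ x₀).inf' ⟨x₀, self_mem_B₁ x₀⟩ fun u => g u + G.d u z
  have hf_le : ∀ u ∈ G.B₁ x₀, ∀ z, f z ≤ g u + G.d u z := fun u hu z => Finset.inf'_le _ hu
  have le_hf : ∀ z c, (∀ u ∈ G.B₁ x₀, c ≤ g u + G.d u z) → c ≤ f z := fun z c hc =>
    Finset.le_inf' _ _ hc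
  have hgy₀ : ∀ u ∈ G.B₁ x₀, (G.d x₀ y₀ : ℝ) ≤ g u + G.d u y₀ := fun u hu => by
    linarith [hgh u hu y₀ (self_mem_B₁ y₀)]
  have hfx₀ : f x₀ = 0 := by
    refine le_antisymm (by simpa [hg, d_self] using hf_le x₀ (self_mem_B₁ x₀) x₀)
      (le_hf _ _ fun u hu => ?_)
    have : G.d u y₀ ≤ G.d u x₀ + G.d x₀ y₀ := hconn.dist_triangle
    have : (G.d u y₀ : ℝ) ≤ G.d u x₀ + G.d x₀ y₀ := by exact_mod_cast this
    linarith [hgy₀ u hu]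
  have hfy₀ : f y₀ = G.d x₀ y₀ :=
    le_antisymm (by simpa [hg] using hf_le x₀ (self_mem_B₁ x₀) y₀) (le_hf _ _ hgy₀)
  refine ⟨f, .finset_inf' _ fun u _ => isOneLipschitz_const_add_d hconn _ u,
    by rw [hfx₀, hfy₀, sub_zero], ?_⟩
  have hx₀ : G.lap f x₀ ≤ ∑ x ∈ G.S₁ x₀, G.q x₀ x * g x := by
    rw [lap_eq_sum, hfx₀]
    refine Finset.sum_le_sum fun z hz => mul_le_mul_of_nonneg_left ?_ (q_nonneg _ _)
    simpa [d_self] using hf_le z (mem_B₁_of_mem_S₁ hz) z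
  have hy₀ : -G.lap f y₀ ≤ ∑ y ∈ G.S₁ y₀, G.q y₀ y * h y := by
    rw [lap_eq_sum, hfy₀, ← Finset.sum_neg_distrib]
    refine Finset.sum_le_sum fun z hz => ?_
    rw [← mul_neg, neg_sub]
    refine mul_le_mul_of_nonneg_left ?_ (q_nonneg _ _)
    have := le_hf z (G.d x₀ y₀ - h z) fun u hu => by
      linarith [hgh u hu z (mem_B₁_of_mem_S₁ hz)]
    linarith
  linarith

theorem exists_isOneLipschitz_lt_of_forall_transportCost_lt (hconn : G.toSimpleGraph.Connected)
    (hxy : x₀ ≠ y₀) {s : ℝ}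
    (hs : ∀ ρ, G.IsTransportPlan x₀ y₀ ρ → G.transportCost x₀ y₀ ρ < s) :
    ∃ f, G.IsOneLipschitz f ∧ f y₀ - f x₀ = G.d x₀ y₀ ∧
      (G.lap f x₀ - G.lap f y₀) / G.d x₀ y₀ < s := by
  obtain ⟨g, h, hg, hh, hgh, hlt⟩ := exists_dual_of_forall_transportCost_lt hconn hxy hs
  obtain ⟨f, hf, hfxy, hle⟩ := exists_isOneLipschitz_of_dual hconn hg hh hgh
  refine ⟨f, hf, hfxy, (div_lt_iff₀ (d_pos hconn hxy)).2 ?_⟩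
  linarith

end WeightedGraph

theorem ollivier_curvature_transport_duality_general
    {V : Type*} (G : WeightedGraph V)
    (hconn : G.toSimpleGraph.Connected)
    (x₀ y₀ : V) (hxy : x₀ ≠ y₀) :
    G.kappa x₀ y₀ =
      sSup {c : ℝ | ∃ ρ : V → V → ℝ,
        G.IsTransportPlan x₀ y₀ ρ ∧ c = G.transportCost x₀ y₀ ρ} := by
  rw [WeightedGraph.kappa_eq_sInf hconn hxy]
  set T := {c : ℝ | ∃ ρ : V → V → ℝ, G.IsTransportPlan x₀ y₀ ρ ∧ c = G.transportCost x₀ y₀ ρ}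
  set K := {r | ∃ f, G.IsOneLipschitz f ∧ f y₀ - f x₀ = G.d x₀ y₀ ∧
    r = (G.lap f x₀ - G.lap f y₀) / G.d x₀ y₀}
  have hweak : ∀ c ∈ T, ∀ r ∈ K, c ≤ r := by
    rintro _ ⟨ρ, hρ, rfl⟩ _ ⟨f, hf, hfxy, rfl⟩
    exact hρ.transportCost_le hconn hxy hf hfxy
  have hT : T.Nonempty := ⟨_, _, WeightedGraph.isTransportPlan_trivialPlan, rfl⟩
  have hK : K.Nonempty := ⟨_, _, WeightedGraph.isOneLipschitz_const_add_d hconn 0 x₀,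
    by simp [WeightedGraph.d_self], rfl⟩
  refine le_antisymm (le_of_forall_pos_lt_add fun ε hε => ?_)
    (csSup_le hT fun c hc => le_csInf hK (hweak c hc))
  obtain ⟨f, hf, hfxy, hlt⟩ :=
    WeightedGraph.exists_isOneLipschitz_lt_of_forall_transportCost_lt hconn hxy
      (s := sSup T + ε) fun ρ hρ =>
        (le_csSup ⟨hK.some, fun c hc => hweak c hc _ hK.some_mem⟩ ⟨ρ, hρ, rfl⟩).trans_lt
          (lt_add_of_pos_right _ hε)
  exact (csInf_le ⟨_, hweak _ hT.some_mem⟩ ⟨f, hf, hfxy, rfl⟩).trans_lt hlt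

/-- For a connected, locally finite weighted graph with
`Deg_max < ∞` and vertices `x₀ ≠ y₀`, the Ollivier curvature satisfies the
duality `κ(x₀,y₀) = sup_ρ Σ ρ(x,y) (1 - d(x,y)/d(x₀,y₀))` over all transport
plans `ρ` between `x₀` and `y₀`. -/
theorem ollivier_curvature_transport_duality
    {V : Type*} [Countable V] (G : WeightedGraph V)
    (hconn : G.toSimpleGraph.Connected)
    (hDeg : BddAbove (Set.range G.Deg))
    (x₀ y₀ : V) (hxy : x₀ ≠ y₀) :
    G.kappa x₀ y₀ =
      sSup {c : ℝ | ∃ ρ : V → V → ℝ,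
        G.IsTransportPlan x₀ y₀ ρ ∧ c = G.transportCost x₀ y₀ ρ} :=
  ollivier_curvature_transport_duality_general G hconn x₀ y₀ hxy
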